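/- Let u, u', w be real speeds with w ≠ u. Consider a family of parallel trajectories t ↦ cᵢ + u·t (real starting positions cᵢ) and a scaling trajectory t ↦ w·t. The scaling trajectory meets the i-th parallel trajectory at time tᵢ = cᵢ/(w − u). If, from that event onward, the i-th signal proceeds with the new common speed u' (trajectory x = cᵢ + u·tᵢ + u'·(t − tᵢ) for t ≥ tᵢ), then at any common later time T its position equals cᵢ·(w − u')/(w − u) + u'·T. Consequently the pairwise distances between the signals at any common time after all crossings are multiplied by the constant factor |(w − u')/(w − u)| relative to the original distances |cᵢ − cⱼ|. -/
import Mathlib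

/-- A scaling signal `t ↦ w·t` crosses the parallel family `t ↦ cᵢ + u·t` (with `w ≠ u`)
at times `tᵢ = cᵢ/(w - u)`; if each signal then proceeds with the new common speed `u'`,
its position at any time `T` equals `cᵢ·(w - u')/(w - u) + u'·T`, so all pairwise
distances are multiplied by the constant factor `|(w - u')/(w - u)|`. -/
theorem scaling_factor (n : ℕ) (c : Fin n → ℝ) (u u' w : ℝ) (hwu : w ≠ u) :
    (∀ i : Fin n,
      c i + u * (c i / (w - u)) = w * (c i / (w - u))) ∧
    (∀ i : Fin n, ∀ T : ℝ,
      c i + u * (c i / (w - u)) + u' * (T - c i / (w - u)) =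
        c i * (w - u') / (w - u) + u' * T) ∧
    (∀ i j : Fin n, ∀ T : ℝ,
      |(c i + u * (c i / (w - u)) + u' * (T - c i / (w - u))) -
        (c j + u * (c j / (w - u)) + u' * (T - c j / (w - u)))| =
        |(w - u') / (w - u)| * |c i - c j|) := by
  have h : w - u ≠ 0 := sub_ne_zero.mpr hwu
  refine ⟨fun i => by field_simp; ring, fun i T => by field_simp; ring, fun i j T => ?_⟩
  rw [← abs_mul]
  congr 1
  field_simp
  ring
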